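/- Let A ∈ ℝ^{m×N} with rank(A) = m, y ∈ ℝ^m, p ∈ [2,∞) and α > 0. Then for every t ≥ 0, the gradient-flow state ψ_α(t) equals 𝒱_p(A, Aψ_α(t)), i.e., ψ_α(t) is the unique minimizer of Q_p over the affine set {z ∈ ℝ^N : Az = Aψ_α(t)}. -/

import Mathlib

noncomputable section

/-- The Euclidean (ℓ²) norm of a vector in ℝⁿ. -/
def norm2 {n : ℕ} (v : Fin n → ℝ) : ℝ := Real.sqrt (∑ i, v i ^ 2)

/-- The ℓ¹ norm of a vector in ℝⁿ. -/
def norm1 {n : ℕ} (v : Fin n → ℝ) : ℝ := ∑ i, |v i|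

/-- The sup (ℓ^∞) norm of a vector in ℝⁿ. -/
def normInf {n : ℕ} (v : Fin n → ℝ) : ℝ := ⨆ i, |v i|

/-- The ℓʳ (quasi-)norm ‖v‖_r = (∑ |v i|^r)^(1/r). -/
def normr {n : ℕ} (r : ℝ) (v : Fin n → ℝ) : ℝ := (∑ i, |v i| ^ r) ^ (1 / r)

/-- The smallest singular value of `A`, via `σ_min(A) = inf {‖Aᵀ z‖₂ : ‖z‖₂ = 1}`. -/
def sigmaMin {m N : ℕ} (A : Matrix (Fin m) (Fin N) ℝ) : ℝ :=
  sInf {c : ℝ | ∃ z : Fin m → ℝ, norm2 z = 1 ∧ c = norm2 (A.transpose.mulVec z)}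

/-- The entropy H(z) = −∑ |z i| ln |z i| (with the convention 0 · ln 0 = 0,
which holds automatically since `Real.log 0 = 0`). -/
def Hent {n : ℕ} (z : Fin n → ℝ) : ℝ := -∑ i, |z i| * Real.log |z i|

/-- The set 𝒰(A,y) of basis-pursuit minimizers: minimizers of ‖·‖₁ subject to Az = y. -/
def BPset {m N : ℕ} (A : Matrix (Fin m) (Fin N) ℝ) (y : Fin m → ℝ) : Set (Fin N → ℝ) :=
  {z | A.mulVec z = y ∧ ∀ w : Fin N → ℝ, A.mulVec w = y → norm1 z ≤ norm1 w}

/-- The basis-pursuit minimum value R(A,y) = min {‖z‖₁ : Az = y}. -/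
def Rmin {m N : ℕ} (A : Matrix (Fin m) (Fin N) ℝ) (y : Fin m → ℝ) : ℝ :=
  sInf (norm1 '' {z : Fin N → ℝ | A.mulVec z = y})

/-- The function h_p: h₂(t) = 2 sinh t, and for p > 2,
h_p(t) = (1−t)^{−p/(p−2)} − (1+t)^{−p/(p−2)}. -/
def hfun (p t : ℝ) : ℝ :=
  if p = 2 then 2 * Real.sinh t
  else (1 - t) ^ (-(p / (p - 2))) - (1 + t) ^ (-(p / (p - 2)))

/-- The natural domain of h_p: all of ℝ when p = 2, and (−1,1) when p > 2. -/
def hDomain (p : ℝ) : Set ℝ := if p = 2 then Set.univ else Set.Ioo (-1) 1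

/-- The inverse h_p^{-1} : ℝ → ℝ of h_p (h_p is a strictly increasing bijection
from its domain onto ℝ). -/
def hInv (p u : ℝ) : ℝ := Function.invFunOn (hfun p) (hDomain p) u

/-- q_p(u) = ∫₀ᵘ h_p^{−1}(v) dv. -/
def qfun (p u : ℝ) : ℝ := ∫ v in (0:ℝ)..u, hInv p v

/-- Q_p(z) = α^p ∑ q_p(z i / α^p). -/
def Qfun {n : ℕ} (p α : ℝ) (z : Fin n → ℝ) : ℝ := α ^ p * ∑ i, qfun p (z i / α ^ p)

/-- g_p: g₂(u) = |u| ln(|u|/e) (with g₂(0) = 0), and for p > 2,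
g_p(u) = |u| − (p/2)|u|^{2/p}. -/
def gfun (p u : ℝ) : ℝ :=
  if p = 2 then (if u = 0 then 0 else |u| * Real.log (|u| / Real.exp 1))
  else |u| - p / 2 * |u| ^ (2 / p)

/-- G_p(z) = α^p ∑ g_p(z i / α^p). -/
def Gfun {n : ℕ} (p α : ℝ) (z : Fin n → ℝ) : ℝ := α ^ p * ∑ i, gfun p (z i / α ^ p)

/-- The predictor ψ_θ = θ₊^p − θ₋^p (componentwise powers), for a parameter vector
θ = (θ₊, θ₋) ∈ ℝ^{2N}. -/
def psiOf {N : ℕ} (p : ℝ) (θ : EuclideanSpace ℝ (Fin N ⊕ Fin N)) : Fin N → ℝ :=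
  fun i => θ (Sum.inl i) ^ p - θ (Sum.inr i) ^ p

/-- The squared loss L(θ) = (1/2)‖A ψ_θ − y‖₂². -/
def lossFun {m N : ℕ} (A : Matrix (Fin m) (Fin N) ℝ) (y : Fin m → ℝ) (p : ℝ)
    (θ : EuclideanSpace ℝ (Fin N ⊕ Fin N)) : ℝ :=
  (1 / 2) * ∑ j, (A.mulVec (psiOf p θ) j - y j) ^ 2

end

/-!
Each coordinate of the flow solves `θ' = ∓ p θ^{p-1} (Aᵀ r)ᵢ` with residual `r = Aψ - y`, which
integrates in closed form: `θ₊ᵢ^p = α^p k_p(sᵢ)` and `θ₋ᵢ^p = α^p k_p(-sᵢ)`, where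
`s = -b Aᵀ ∫₀ᵗ r` (`b = 4` for `p = 2`, `b = p (p-2) α^{p-2}` otherwise). Since
`h_p(s) = k_p(s) - k_p(-s)`, this says `h_p⁻¹(ψ(t)/α^p) = s ∈ range Aᵀ`. Now `q_p` is strictly
convex with derivative `h_p⁻¹`, so `∇Q_p(ψ(t)) = s` is orthogonal to `ker A`, which is exactly the
condition for `ψ(t)` to be the unique minimizer of `Q_p` on `ψ(t) + ker A`.
-/

open Real Set Matrix MeasureTheory

section InverseOfH

variable {p : ℝ}

lemma hfun_neg (t : ℝ) : hfun p (-t) = -hfun p t := by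
  unfold hfun
  split_ifs
  · simp [sinh_neg]
  · rw [sub_neg_eq_add, ← sub_eq_add_neg]
    ring

lemma hDomain_of_lt (hp : 2 < p) : hDomain p = Ioo (-1) 1 := if_neg hp.ne'

lemma hfun_of_lt (hp : 2 < p) (t : ℝ) :
    hfun p t = (1 - t) ^ (-(p / (p - 2))) - (1 + t) ^ (-(p / (p - 2))) := if_neg hp.ne'

lemma hfun_strictMonoOn (hp : 2 ≤ p) : StrictMonoOn (hfun p) (hDomain p) := by
  rcases hp.eq_or_lt with rfl | hp
  · intro a _ b _ hab
    simpa [hfun] using sinh_lt_sinh.2 hab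
  · rw [hDomain_of_lt hp]
    intro a ha b hb hab
    have hγ : -(p / (p - 2)) < 0 := neg_neg_of_pos (div_pos (by linarith) (by linarith))
    have h₁ : (1 - a) ^ (-(p / (p - 2))) < (1 - b) ^ (-(p / (p - 2))) :=
      rpow_lt_rpow_of_neg (by linarith [hb.2]) (by linarith) hγ
    have h₂ : (1 + b) ^ (-(p / (p - 2))) < (1 + a) ^ (-(p / (p - 2))) :=
      rpow_lt_rpow_of_neg (by linarith [ha.1]) (by linarith) hγ
    rw [hfun_of_lt hp, hfun_of_lt hp]
    linarith

lemma hfun_continuousOn_of_lt (hp : 2 < p) : ContinuousOn (hfun p) (Ioo (-1) 1) := by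
  refine ContinuousOn.congr ?_ fun t _ => hfun_of_lt hp t
  refine (ContinuousOn.rpow_const (f := fun t => 1 - t) (by fun_prop) ?_).sub
    (ContinuousOn.rpow_const (f := fun t => 1 + t) (by fun_prop) ?_)
  · exact fun t ht => Or.inl (by linarith [ht.2])
  · exact fun t ht => Or.inl (by linarith [ht.1])

lemma exists_le_hfun (hp : 2 < p) (u : ℝ) : ∃ b ∈ Ioo (0 : ℝ) 1, u ≤ hfun p b := by
  set ε : ℝ := (|u| + 2)⁻¹
  have hε : 0 < ε := by positivity
  have hε1 : ε < 1 := inv_lt_one_of_one_lt₀ (by linarith [abs_nonneg u])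
  have hγ : 1 ≤ p / (p - 2) := by rw [le_div_iff₀ (by linarith)]; linarith
  refine ⟨1 - ε, ⟨by linarith, by linarith⟩, ?_⟩
  have h₁ : |u| + 2 ≤ ε ^ (-(p / (p - 2))) := by
    calc |u| + 2 = ε ^ (-1 : ℝ) := by rw [rpow_neg_one, inv_inv]
      _ ≤ ε ^ (-(p / (p - 2))) :=
        rpow_le_rpow_of_exponent_ge hε hε1.le (by linarith)
  have h₂ : (2 - ε) ^ (-(p / (p - 2))) ≤ 1 :=
    rpow_le_one_of_one_le_of_nonpos (by linarith) (by linarith)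
  rw [hfun_of_lt hp, sub_sub_cancel, show (1 : ℝ) + (1 - ε) = 2 - ε by ring]
  linarith [le_abs_self u]

lemma hfun_surjOn (hp : 2 ≤ p) : SurjOn (hfun p) (hDomain p) univ := by
  intro u _
  rcases hp.eq_or_lt with rfl | hp
  · exact ⟨arsinh (u / 2), by simp [hDomain], by simp only [hfun, if_true, sinh_arsinh]; ring⟩
  · obtain ⟨b, hb, hub⟩ := exists_le_hfun hp |u|
    have hIcc : Icc (-b) b ⊆ hDomain p := by
      rw [hDomain_of_lt hp]
      exact Icc_subset_Ioo (by linarith [hb.2]) hb.2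
    have hmem : u ∈ Icc (hfun p (-b)) (hfun p b) := by
      rw [hfun_neg]
      exact ⟨by linarith [neg_abs_le u], (le_abs_self u).trans hub⟩
    obtain ⟨s, hs, rfl⟩ := intermediate_value_Icc (by linarith [hb.1])
      ((hfun_continuousOn_of_lt hp).mono (hDomain_of_lt hp ▸ hIcc)) hmem
    exact ⟨s, hIcc hs, rfl⟩

lemma hInv_mem (hp : 2 ≤ p) (u : ℝ) : hInv p u ∈ hDomain p :=
  Function.invFunOn_mem (hfun_surjOn hp trivial)

lemma hfun_hInv (hp : 2 ≤ p) (u : ℝ) : hfun p (hInv p u) = u :=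
  Function.invFunOn_eq (hfun_surjOn hp trivial)

lemma hInv_hfun (hp : 2 ≤ p) {s : ℝ} (hs : s ∈ hDomain p) : hInv p (hfun p s) = s :=
  (hfun_strictMonoOn hp).injOn.leftInvOn_invFunOn hs

lemma hInv_strictMono (hp : 2 ≤ p) : StrictMono (hInv p) := by
  intro u v huv
  by_contra! h
  have := (hfun_strictMonoOn hp).monotoneOn (hInv_mem hp v) (hInv_mem hp u) h
  rw [hfun_hInv hp, hfun_hInv hp] at this
  linarith

end InverseOfH

lemma mul_sub_lt_intervalIntegral_of_strictMono {g : ℝ → ℝ} (hg : StrictMono g) {a b : ℝ}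
    (hab : a ≠ b) : g a * (b - a) < ∫ v in a..b, g v := by
  have hint : ∀ x y : ℝ, IntervalIntegrable g volume x y :=
    fun _ _ => hg.monotone.intervalIntegrable
  rcases hab.lt_or_gt with hab | hab
  · have := intervalIntegral.intervalIntegral_pos_of_pos_on
      ((hint a b).sub intervalIntegrable_const)
      (fun x hx => sub_pos.2 (hg hx.1)) hab
    rw [intervalIntegral.integral_sub (hint a b) intervalIntegrable_const,
      intervalIntegral.integral_const, smul_eq_mul] at this
    linarith
  · have := intervalIntegral.intervalIntegral_pos_of_pos_on
      (intervalIntegrable_const.sub (hint b a))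
      (fun x hx => sub_pos.2 (hg hx.2)) hab
    rw [intervalIntegral.integral_sub intervalIntegrable_const (hint b a),
      intervalIntegral.integral_const, smul_eq_mul, intervalIntegral.integral_symm] at this
    linarith

section Bregman

variable {p : ℝ}

lemma hInv_mul_sub_lt_qfun_sub (hp : 2 ≤ p) {a b : ℝ} (hab : a ≠ b) :
    hInv p a * (b - a) < qfun p b - qfun p a := by
  have hint : ∀ x y : ℝ, IntervalIntegrable (hInv p) volume x y :=
    fun _ _ => (hInv_strictMono hp).monotone.intervalIntegrable
  rw [qfun, qfun, intervalIntegral.integral_interval_sub_left (hint 0 b) (hint 0 a)]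
  exact mul_sub_lt_intervalIntegral_of_strictMono (hInv_strictMono hp) hab

lemma hInv_mul_sub_le_qfun_sub (hp : 2 ≤ p) (a b : ℝ) :
    hInv p a * (b - a) ≤ qfun p b - qfun p a := by
  rcases eq_or_ne a b with rfl | hab
  · simp
  · exact (hInv_mul_sub_lt_qfun_sub hp hab).le

lemma Qfun_lt_of_hInv_eq_transpose_mulVec {m N : ℕ} (A : Matrix (Fin m) (Fin N) ℝ) (hp : 2 ≤ p)
    {α : ℝ} (hα : 0 < α) {ψ z : Fin N → ℝ} {v : Fin m → ℝ}
    (hψ : ∀ i, hInv p (ψ i / α ^ p) = (Aᵀ *ᵥ v) i) (hz : A *ᵥ z = A *ᵥ ψ) (hne : z ≠ ψ) :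
    Qfun p α ψ < Qfun p α z := by
  have hαp : 0 < α ^ p := rpow_pos_of_pos hα p
  have horth : ∑ i, (Aᵀ *ᵥ v) i * (z i / α ^ p - ψ i / α ^ p) = 0 := by
    have : (Aᵀ *ᵥ v) ⬝ᵥ (z - ψ) = v ⬝ᵥ (A *ᵥ (z - ψ)) := by
      rw [mulVec_transpose, dotProduct_mulVec]
    rw [mulVec_sub, hz, sub_self, dotProduct_zero, dotProduct] at this
    simp only [Pi.sub_apply] at this
    simp only [← sub_div, mul_div_assoc', ← Finset.sum_div, this, zero_div]
  obtain ⟨i₀, hi₀⟩ := Function.ne_iff.1 hne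
  have hlt : ∑ i, (Aᵀ *ᵥ v) i * (z i / α ^ p - ψ i / α ^ p)
      < ∑ i, (qfun p (z i / α ^ p) - qfun p (ψ i / α ^ p)) := by
    refine Finset.sum_lt_sum (fun i _ => hψ i ▸ hInv_mul_sub_le_qfun_sub hp _ _)
      ⟨i₀, Finset.mem_univ _, hψ i₀ ▸ hInv_mul_sub_lt_qfun_sub hp ?_⟩
    exact fun h => hi₀ ((div_left_inj' hαp.ne').1 h).symm
  rw [horth, Finset.sum_sub_distrib, sub_pos] at hlt
  exact mul_lt_mul_of_pos_left hlt hαp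

end Bregman

section Loss

variable {m N : ℕ} (A : Matrix (Fin m) (Fin N) ℝ) (y : Fin m → ℝ) (p : ℝ)

noncomputable def lossGrad (θ : EuclideanSpace ℝ (Fin N ⊕ Fin N)) :
    EuclideanSpace ℝ (Fin N ⊕ Fin N) :=
  WithLp.toLp 2 (Sum.elim
    (fun i => p * θ (Sum.inl i) ^ (p - 1) * (Aᵀ *ᵥ (A *ᵥ psiOf p θ - y)) i)
    (fun i => -(p * θ (Sum.inr i) ^ (p - 1) * (Aᵀ *ᵥ (A *ᵥ psiOf p θ - y)) i)))

variable {p}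

lemma continuous_psiOf (hp : 0 ≤ p) : Continuous (psiOf (N := N) p) :=
  continuous_pi fun i =>
    ((continuous_rpow_const hp).comp (EuclideanSpace.proj (𝕜 := ℝ) (Sum.inl i)).continuous).sub
      ((continuous_rpow_const hp).comp (EuclideanSpace.proj (𝕜 := ℝ) (Sum.inr i)).continuous)

lemma hasFDerivAt_psiOf_apply (hp : 1 ≤ p) (θ : EuclideanSpace ℝ (Fin N ⊕ Fin N)) (i : Fin N) :
    HasFDerivAt (fun θ => psiOf p θ i)
      ((p * θ (Sum.inl i) ^ (p - 1)) • EuclideanSpace.proj (𝕜 := ℝ) (Sum.inl i)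
        - (p * θ (Sum.inr i) ^ (p - 1)) • EuclideanSpace.proj (𝕜 := ℝ) (Sum.inr i)) θ :=
  ((hasDerivAt_rpow_const (Or.inr hp)).comp_hasFDerivAt θ
      (EuclideanSpace.proj (𝕜 := ℝ) (Sum.inl i)).hasFDerivAt).sub
    ((hasDerivAt_rpow_const (Or.inr hp)).comp_hasFDerivAt θ
      (EuclideanSpace.proj (𝕜 := ℝ) (Sum.inr i)).hasFDerivAt)

lemma hasGradientAt_lossFun (hp : 1 ≤ p) (θ : EuclideanSpace ℝ (Fin N ⊕ Fin N)) :
    HasGradientAt (lossFun A y p) (lossGrad A y p θ) θ := by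
  rw [hasGradientAt_iff_hasFDerivAt]
  have hres : ∀ j, HasFDerivAt (fun θ => (A *ᵥ psiOf p θ) j - y j)
      (∑ i, A j i • ((p * θ (Sum.inl i) ^ (p - 1)) • EuclideanSpace.proj (𝕜 := ℝ) (Sum.inl i)
        - (p * θ (Sum.inr i) ^ (p - 1)) • EuclideanSpace.proj (𝕜 := ℝ) (Sum.inr i))) θ := by
    intro j
    simp only [mulVec, dotProduct]
    exact (HasFDerivAt.fun_sum fun i _ =>
      (hasFDerivAt_psiOf_apply hp θ i).const_mul (A j i)).sub_const _
  have := (HasFDerivAt.fun_sum fun j (_ : j ∈ Finset.univ) => (hres j).pow 2).const_mul (1 / 2 : ℝ)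
  refine this.congr_fderiv (ContinuousLinearMap.ext fun v => ?_)
  simp only [one_div, mulVec, dotProduct, Nat.add_one_sub_one, pow_one, nsmul_eq_mul,
    Nat.cast_ofNat, _root_.smul_apply, _root_.sum_apply, _root_.sub_apply, PiLp.proj_apply,
    smul_eq_mul, lossGrad, transpose_apply, Pi.sub_apply, InnerProductSpace.toDual_apply_apply,
    PiLp.inner_apply, RCLike.inner_apply, ringHom_apply, Fintype.sum_sum_type, Sum.elim_inl,
    Sum.elim_inr, mul_neg, Finset.sum_neg_distrib]
  simp only [Finset.mul_sum, ← Finset.sum_neg_distrib, ← Finset.sum_add_distrib]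
  rw [Finset.sum_comm]
  exact Finset.sum_congr rfl fun i _ => Finset.sum_congr rfl fun j _ => by ring

end Loss

section ODE

variable {f c : ℝ → ℝ}

lemma hasDerivWithinAt_integral_Ici (hc : ContinuousOn c (Ici 0)) {t : ℝ} (ht : 0 ≤ t) :
    HasDerivWithinAt (fun s => ∫ v in (0 : ℝ)..s, c v) (c t) (Ici t) t :=
  intervalIntegral.integral_hasDerivWithinAt_right
    ((hc.mono Icc_subset_Ici_self).intervalIntegrable_of_Icc ht)
    ((hc.stronglyMeasurableAtFilter_nhdsWithin measurableSet_Ici t).filter_mono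
      (nhdsWithin_mono _ fun _ hx => ht.trans (le_of_lt hx)))
    ((hc t ht).mono fun _ hx => ht.trans (le_of_lt hx))

lemma continuousOn_integral_Icc (hc : ContinuousOn c (Ici 0)) {t : ℝ} (ht : 0 ≤ t) :
    ContinuousOn (fun s => ∫ v in (0 : ℝ)..s, c v) (Icc 0 t) := by
  have := intervalIntegral.continuousOn_primitive_interval (μ := volume)
    ((hc.mono Icc_subset_Ici_self).integrableOn_compact isCompact_Icc |>.mono_set
      (by rw [uIcc_of_le ht]))
  rwa [uIcc_of_le ht] at this

lemma eq_mul_exp_integral_of_hasDerivWithinAt (hc : ContinuousOn c (Ici 0))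
    (hf : ∀ t ∈ Ici (0 : ℝ), HasDerivWithinAt f (c t * f t) (Ici 0) t) {t : ℝ} (ht : 0 ≤ t) :
    f t = f 0 * exp (∫ s in (0 : ℝ)..t, c s) := by
  set I := fun s => ∫ v in (0 : ℝ)..s, c v
  have hderiv : ∀ x ∈ Ico 0 t, HasDerivWithinAt (fun s => f s * exp (-I s)) 0 (Ici x) x := by
    intro x hx
    have := ((hf x hx.1).mono (Ici_subset_Ici.2 hx.1)).fun_mul
      (hasDerivWithinAt_integral_Ici hc hx.1).fun_neg.exp
    exact this.congr_deriv (by ring)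
  have hcont : ContinuousOn (fun s => f s * exp (-I s)) (Icc 0 t) :=
    ContinuousOn.mul (fun x hx => (hf x hx.1).continuousWithinAt.mono Icc_subset_Ici_self)
      (continuousOn_integral_Icc hc ht).neg.rexp
  have := constant_of_has_deriv_right_zero hcont hderiv t (right_mem_Icc.2 ht)
  simp only [I, intervalIntegral.integral_same, neg_zero, exp_zero, mul_one] at this
  rw [← this, mul_assoc, ← exp_add, neg_add_cancel, exp_zero, mul_one]

end ODE

section PowerLaw

variable {p : ℝ} {f C : ℝ → ℝ}

lemma rpow_sub_one_eq_rpow_sub_two_mul (hp : p ≠ 1) (x : ℝ) :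
    x ^ (p - 1) = x ^ (p - 2) * x := by
  rcases eq_or_ne x 0 with rfl | hx
  · rw [zero_rpow (sub_ne_zero.2 hp), mul_zero]
  · rw [← rpow_add_one hx]
    ring_nf

lemma eq_mul_exp_of_hasDerivWithinAt_rpow (hp : 2 ≤ p) (hC : ContinuousOn C (Ici 0))
    (hf : ∀ t ∈ Ici (0 : ℝ), HasDerivWithinAt f (-(p * f t ^ (p - 1) * C t)) (Ici 0) t)
    {t : ℝ} (ht : 0 ≤ t) :
    f t = f 0 * exp (∫ s in (0 : ℝ)..t, -(p * f s ^ (p - 2) * C s)) := by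
  refine eq_mul_exp_integral_of_hasDerivWithinAt ?_ (fun s hs => ?_) ht
  · have hfc : ContinuousOn f (Ici 0) := fun s hs => (hf s hs).continuousWithinAt
    exact ((continuousOn_const.mul
      ((continuous_rpow_const (by linarith)).comp_continuousOn hfc)).mul hC).neg
  · convert hf s hs using 1
    rw [rpow_sub_one_eq_rpow_sub_two_mul (by linarith : 1 < p).ne']
    ring

lemma rpow_two_eq_of_hasDerivWithinAt (hC : ContinuousOn C (Ici 0))
    (hf : ∀ t ∈ Ici (0 : ℝ), HasDerivWithinAt f (-(2 * f t ^ ((2 : ℝ) - 1) * C t)) (Ici 0) t)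
    {t : ℝ} (ht : 0 ≤ t) :
    f t ^ (2 : ℝ) = f 0 ^ (2 : ℝ) * exp (-(4 * ∫ s in (0 : ℝ)..t, C s)) := by
  rw [eq_mul_exp_of_hasDerivWithinAt_rpow le_rfl hC hf ht]
  simp only [sub_self, rpow_zero, intervalIntegral.integral_neg,
    intervalIntegral.integral_const_mul, rpow_two, mul_pow, ← exp_nat_mul]
  ring_nf

/-- For `p > 2` the quantity `f^{2-p}` grows affinely with slope `p (p-2) C`. -/
lemma rpow_eq_of_hasDerivWithinAt (hp : 2 < p) (hf0 : 0 < f 0) (hC : ContinuousOn C (Ici 0))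
    (hf : ∀ t ∈ Ici (0 : ℝ), HasDerivWithinAt f (-(p * f t ^ (p - 1) * C t)) (Ici 0) t)
    {t : ℝ} (ht : 0 ≤ t) :
    0 < 1 + p * (p - 2) * f 0 ^ (p - 2) * ∫ s in (0 : ℝ)..t, C s ∧
      f t ^ p =
        f 0 ^ p * (1 + p * (p - 2) * f 0 ^ (p - 2) * ∫ s in (0 : ℝ)..t, C s) ^ (-(p / (p - 2))) := by
  have hpos : ∀ s ∈ Ici (0 : ℝ), 0 < f s := fun s hs => by
    rw [eq_mul_exp_of_hasDerivWithinAt_rpow hp.le hC hf hs]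
    positivity
  have hderiv : ∀ s ∈ Ici (0 : ℝ),
      HasDerivWithinAt (fun s => f s ^ (2 - p)) (p * (p - 2) * C s) (Ici 0) s := by
    intro s hs
    refine ((hasDerivAt_rpow_const (Or.inl (hpos s hs).ne')).comp_hasDerivWithinAt s
      (hf s hs)).congr_deriv ?_
    have : f s ^ (2 - p - 1) * f s ^ (p - 1) = 1 := by
      rw [← rpow_add (hpos s hs), show 2 - p - 1 + (p - 1) = 0 by ring, rpow_zero]
    linear_combination (-(p * (2 - p) * C s)) * this
  have hFTC := intervalIntegral.integral_eq_sub_of_hasDeriv_right_of_le ht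
    (fun s hs => (hderiv s hs.1).continuousWithinAt.mono Icc_subset_Ici_self)
    (fun s hs => (hderiv s hs.1.le).mono fun _ hx => hs.1.le.trans (le_of_lt hx))
    ((continuousOn_const.mul (hC.mono Icc_subset_Ici_self)).intervalIntegrable_of_Icc ht)
  rw [intervalIntegral.integral_const_mul] at hFTC
  have hf0' : f 0 ^ (2 - p) * f 0 ^ (p - 2) = 1 := by
    rw [← rpow_add hf0, show 2 - p + (p - 2) = 0 by ring, rpow_zero]
  have hft : f t ^ (2 - p) =
      f 0 ^ (2 - p) * (1 + p * (p - 2) * f 0 ^ (p - 2) * ∫ s in (0 : ℝ)..t, C s) := by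
    linear_combination -hFTC - (p * (p - 2) * ∫ s in (0 : ℝ)..t, C s) * hf0'
  set X := 1 + p * (p - 2) * f 0 ^ (p - 2) * ∫ s in (0 : ℝ)..t, C s
  have hX : 0 < X := by
    have := rpow_pos_of_pos (hpos t ht) (2 - p)
    rw [hft] at this
    exact pos_of_mul_pos_right this (rpow_pos_of_pos hf0 _).le
  refine ⟨hX, ?_⟩
  have hexp : (2 - p) * -(p / (p - 2)) = p := by
    field_simp [show p - 2 ≠ 0 by linarith]
    ring
  have hpow : ∀ x : ℝ, 0 < x → x ^ p = (x ^ (2 - p)) ^ (-(p / (p - 2))) := fun x hx => by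
    rw [← rpow_mul hx.le, hexp]
  rw [hpow _ (hpos t ht), hpow _ hf0, hft, mul_rpow (rpow_pos_of_pos hf0 _).le hX.le]

noncomputable def kfun (p s : ℝ) : ℝ := if p = 2 then exp s else (1 - s) ^ (-(p / (p - 2)))

noncomputable def flowRate (p α : ℝ) : ℝ := if p = 2 then 4 else p * (p - 2) * α ^ (p - 2)

lemma hfun_eq_kfun_sub_kfun_neg (p s : ℝ) : hfun p s = kfun p s - kfun p (-s) := by
  unfold hfun kfun
  split_ifs
  · rw [sinh_eq]
    ring
  · rw [sub_neg_eq_add]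

lemma rpow_eq_kfun_of_hasDerivWithinAt (hp : 2 ≤ p) (hf0 : 0 < f 0)
    (hC : ContinuousOn C (Ici 0))
    (hf : ∀ t ∈ Ici (0 : ℝ), HasDerivWithinAt f (-(p * f t ^ (p - 1) * C t)) (Ici 0) t)
    {t : ℝ} (ht : 0 ≤ t) :
    (2 < p → -(flowRate p (f 0) * ∫ s in (0 : ℝ)..t, C s) < 1) ∧
      f t ^ p = f 0 ^ p * kfun p (-(flowRate p (f 0) * ∫ s in (0 : ℝ)..t, C s)) := by
  rcases hp.eq_or_lt with rfl | hp
  · refine ⟨fun h => absurd h (lt_irrefl _), ?_⟩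
    simp only [kfun, flowRate, if_true]
    exact rpow_two_eq_of_hasDerivWithinAt hC hf ht
  · obtain ⟨hX, hft⟩ := rpow_eq_of_hasDerivWithinAt hp hf0 hC hf ht
    simp only [kfun, flowRate, if_neg hp.ne', sub_neg_eq_add]
    exact ⟨fun _ => by linarith, hft⟩

end PowerLaw

lemma intervalIntegral_mulVec_apply {ι κ : Type*} [Fintype κ] (M : Matrix ι κ ℝ)
    {r : ℝ → κ → ℝ} {a b : ℝ} (hr : ∀ j, IntervalIntegrable (fun s => r s j) volume a b) (i : ι) :
    ∫ s in a..b, (M *ᵥ r s) i = (M *ᵥ fun j => ∫ s in a..b, r s j) i := by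
  simp only [mulVec, dotProduct]
  rw [intervalIntegral.integral_finsetSum fun j _ => (hr j).const_mul _]
  simp only [intervalIntegral.integral_const_mul]

noncomputable def integratedResidual {m N : ℕ} (A : Matrix (Fin m) (Fin N) ℝ) (y : Fin m → ℝ)
    (p : ℝ) (θ : ℝ → EuclideanSpace ℝ (Fin N ⊕ Fin N)) (t : ℝ) : Fin m → ℝ :=
  fun j => ∫ τ in (0 : ℝ)..t, (A *ᵥ psiOf p (θ τ) - y) j

section GradientFlow

variable {m N : ℕ} {A : Matrix (Fin m) (Fin N) ℝ} {y : Fin m → ℝ} {p α : ℝ}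
  {θ : ℝ → EuclideanSpace ℝ (Fin N ⊕ Fin N)}

lemma hasDerivWithinAt_apply_of_gradientFlow (hp : 1 ≤ p)
    (hflow : ∀ t : ℝ, 0 ≤ t → HasDerivWithinAt θ (-gradient (lossFun A y p) (θ t)) (Ici 0) t)
    {t : ℝ} (ht : 0 ≤ t) (k : Fin N ⊕ Fin N) :
    HasDerivWithinAt (fun s => θ s k) (-lossGrad A y p (θ t) k) (Ici 0) t := by
  have := (EuclideanSpace.proj (𝕜 := ℝ) k).hasFDerivAt.comp_hasDerivWithinAt t
    (hflow t ht)
  rwa [(hasGradientAt_lossFun A y hp (θ t)).gradient] at this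

lemma continuousOn_residual (hp : 0 ≤ p)
    (hflow : ∀ t : ℝ, 0 ≤ t → HasDerivWithinAt θ (-gradient (lossFun A y p) (θ t)) (Ici 0) t) :
    ContinuousOn (fun s => A *ᵥ psiOf p (θ s) - y) (Ici 0) :=
  ((continuous_const.matrix_mulVec (continuous_psiOf hp)).sub
    continuous_const).comp_continuousOn fun t ht => (hflow t ht).continuousWithinAt

lemma hInv_psiOf_gradientFlow (hp : 2 ≤ p) (hα : 0 < α) (hθ0 : ∀ k, θ 0 k = α)
    (hflow : ∀ t : ℝ, 0 ≤ t → HasDerivWithinAt θ (-gradient (lossFun A y p) (θ t)) (Ici 0) t)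
    {t : ℝ} (ht : 0 ≤ t) (i : Fin N) :
    hInv p (psiOf p (θ t) i / α ^ p) =
      (Aᵀ *ᵥ (-flowRate p α • integratedResidual A y p θ t)) i := by
  set s := (Aᵀ *ᵥ (-flowRate p α • integratedResidual A y p θ t)) i
  set C : ℝ → ℝ := fun τ => (Aᵀ *ᵥ (A *ᵥ psiOf p (θ τ) - y)) i
  have hres := continuousOn_residual (by linarith) hflow
  have hC : ContinuousOn C (Ici 0) :=
    ((continuous_apply i).comp (continuous_const.matrix_mulVec continuous_id)).comp_continuousOn
      hres
  have hs : flowRate p α * ∫ τ in (0 : ℝ)..t, C τ = -s := by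
    have hint : ∀ j, IntervalIntegrable (fun τ => (A *ᵥ psiOf p (θ τ) - y) j) volume 0 t :=
      fun j => ((continuous_apply j).comp_continuousOn
        (hres.mono Icc_subset_Ici_self)).intervalIntegrable_of_Icc ht
    simp only [C, intervalIntegral_mulVec_apply Aᵀ hint i]
    simp only [s, mulVec_smul, Pi.smul_apply, smul_eq_mul, neg_mul, neg_neg]
    rfl
  obtain ⟨hl, hlt⟩ := rpow_eq_kfun_of_hasDerivWithinAt (C := C) hp ((hθ0 _).symm ▸ hα) hC
    (fun τ hτ => by simpa [lossGrad] using
      hasDerivWithinAt_apply_of_gradientFlow (by linarith) hflow hτ (Sum.inl i)) ht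
  obtain ⟨hr, hrt⟩ := rpow_eq_kfun_of_hasDerivWithinAt (C := -C) hp ((hθ0 _).symm ▸ hα) hC.neg
    (fun τ hτ => by simpa [lossGrad] using
      hasDerivWithinAt_apply_of_gradientFlow (by linarith) hflow hτ (Sum.inr i)) ht
  simp only [hθ0, Pi.neg_apply, intervalIntegral.integral_neg, mul_neg, neg_neg] at hl hlt hr hrt
  simp only [hs, neg_neg] at hl hlt hr hrt
  have hdom : s ∈ hDomain p := by
    unfold hDomain
    split_ifs with h2
    · trivial
    · have hp2 : 2 < p := lt_of_le_of_ne hp (Ne.symm h2)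
      exact ⟨by linarith [hr hp2], hl hp2⟩
  have hψ : psiOf p (θ t) i = α ^ p * hfun p s := by
    rw [psiOf, hlt, hrt, hfun_eq_kfun_sub_kfun_neg]
    ring
  rw [hψ, mul_div_cancel_left₀ _ (rpow_pos_of_pos hα p).ne', hInv_hfun hp hdom]

end GradientFlow

theorem stmt4_general (m N : ℕ)
    (A : Matrix (Fin m) (Fin N) ℝ)
    (y : Fin m → ℝ) (p : ℝ) (hp : 2 ≤ p) (α : ℝ) (hα : 0 < α)
    (θ : ℝ → EuclideanSpace ℝ (Fin N ⊕ Fin N))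
    (hθ0 : ∀ i : Fin N ⊕ Fin N, θ 0 i = α)
    (hflow : ∀ t : ℝ, 0 ≤ t →
      HasDerivWithinAt θ (-gradient (lossFun A y p) (θ t)) (Set.Ici 0) t)
    (t : ℝ) (htt : 0 ≤ t) :
    (∀ z : Fin N → ℝ, A.mulVec z = A.mulVec (psiOf p (θ t)) →
        Qfun p α (psiOf p (θ t)) ≤ Qfun p α z) ∧
    (∀ z : Fin N → ℝ, A.mulVec z = A.mulVec (psiOf p (θ t)) →
        Qfun p α z ≤ Qfun p α (psiOf p (θ t)) → z = psiOf p (θ t)) := by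
  have hlt : ∀ z, A *ᵥ z = A *ᵥ psiOf p (θ t) → z ≠ psiOf p (θ t) →
      Qfun p α (psiOf p (θ t)) < Qfun p α z := fun _ hz hne =>
    Qfun_lt_of_hInv_eq_transpose_mulVec A hp hα
      (hInv_psiOf_gradientFlow hp hα hθ0 hflow htt) hz hne
  refine ⟨fun z hz => ?_, fun z hz hQ => ?_⟩
  · rcases eq_or_ne z (psiOf p (θ t)) with rfl | hne
    · exact le_rfl
    · exact (hlt z hz hne).le
  · by_contra hne
    exact (hlt z hz hne).not_ge hQ

/-- Lemma `Apsi_determines_psi`: for every t ≥ 0 the gradient-flow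
state ψ_α(t) equals 𝒱_p(A, Aψ_α(t)), i.e. it is the unique minimizer of Q_p over
the affine set {z : Az = Aψ_α(t)}. -/
theorem stmt4 (m N : ℕ) (hm : 1 ≤ m) (hmN : m < N)
    (A : Matrix (Fin m) (Fin N) ℝ) (hA : A.rank = m)
    (y : Fin m → ℝ) (p : ℝ) (hp : 2 ≤ p) (α : ℝ) (hα : 0 < α)
    (θ : ℝ → EuclideanSpace ℝ (Fin N ⊕ Fin N))
    (hθ0 : ∀ i : Fin N ⊕ Fin N, θ 0 i = α)
    (hflow : ∀ t : ℝ, 0 ≤ t →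
      HasDerivWithinAt θ (-gradient (lossFun A y p) (θ t)) (Set.Ici 0) t)
    (t : ℝ) (htt : 0 ≤ t) :
    (∀ z : Fin N → ℝ, A.mulVec z = A.mulVec (psiOf p (θ t)) →
        Qfun p α (psiOf p (θ t)) ≤ Qfun p α z) ∧
    (∀ z : Fin N → ℝ, A.mulVec z = A.mulVec (psiOf p (θ t)) →
        Qfun p α z ≤ Qfun p α (psiOf p (θ t)) → z = psiOf p (θ t)) :=
  stmt4_general m N A y p hp α hα θ hθ0 hflow t htt
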